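/- arXiv:2001.04089 — 6 statements merged into one kernel-verified Lean document; each statement's English description precedes it below -/
import Mathlib

section
/- For finite sets of natural numbers I and a nonempty subset K ⊆ I, the sum over all subsets J ⊆ K of (-1)^{τ(J, I\J) + τ(K\J, I\K) + |K\J| + τ(J, K\J)} equals 0, where τ(A,B) denotes the number of pairs (a,b) ∈ A × B with a > b (the inversion count of the concatenation of the sorted list of A followed by the sorted list of B). -/
/-- `tau A B` is the number of pairs `(a, b) ∈ A × B` with `a > b` (the inversion
count of the sorted list of `A` followed by the sorted list of `B`). -/
def tau (A B : Finset ℕ) : ℕ := ((A ×ˢ B).filter fun p => p.2 < p.1).card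

lemma tau_union_left {A B C : Finset ℕ} (h : Disjoint A B) :
    tau (A ∪ B) C = tau A C + tau B C := by
  unfold tau
  rw [Finset.union_product, Finset.filter_union, Finset.card_union_of_disjoint]
  exact Finset.disjoint_filter_filter (Finset.disjoint_left.2 fun p hp hp' =>
    (Finset.disjoint_left.1 h) (Finset.mem_product.1 hp).1 (Finset.mem_product.1 hp').1)

lemma tau_union_right {A B C : Finset ℕ} (h : Disjoint B C) :
    tau A (B ∪ C) = tau A B + tau A C := by
  unfold tau
  rw [Finset.product_union, Finset.filter_union, Finset.card_union_of_disjoint]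
  exact Finset.disjoint_filter_filter (Finset.disjoint_left.2 fun p hp hp' =>
    (Finset.disjoint_left.1 h) (Finset.mem_product.1 hp).2 (Finset.mem_product.1 hp').2)

/-- For a finite set `I` of naturals and a nonempty subset `K ⊆ I`, the alternating sum
over subsets `J ⊆ K` of `(-1)^(τ(J, I\J) + τ(K\J, I\K) + |K\J| + τ(J, K\J))` vanishes. -/
theorem stmt0 (I K : Finset ℕ) (hKI : K ⊆ I) (hK : K.Nonempty) :
    ∑ J ∈ K.powerset,
      (-1 : ℤ) ^ (tau J (I \ J) + tau (K \ J) (I \ K) + (K \ J).card + tau J (K \ J)) = 0 := by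
  have key : ∀ J ∈ K.powerset,
      (-1 : ℤ) ^ (tau J (I \ J) + tau (K \ J) (I \ K) + (K \ J).card + tau J (K \ J))
        = (-1) ^ tau K (I \ K) * (-1) ^ (K \ J).card := by
    intro J hJ
    rw [Finset.mem_powerset] at hJ
    have hIJ : I \ J = (I \ K) ∪ (K \ J) := by
      ext x
      simp only [Finset.mem_sdiff, Finset.mem_union]
      constructor
      · rintro ⟨hx, hxJ⟩
        by_cases hxK : x ∈ K
        · exact Or.inr ⟨hxK, hxJ⟩
        · exact Or.inl ⟨hx, hxK⟩
      · rintro (⟨hx, hxK⟩ | ⟨hxK, hxJ⟩)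
        · exact ⟨hx, fun h => hxK (hJ h)⟩
        · exact ⟨hKI hxK, hxJ⟩
    have hdisj : Disjoint (I \ K) (K \ J) :=
      Finset.disjoint_left.2 fun x hx hx' =>
        (Finset.mem_sdiff.1 hx).2 (Finset.mem_sdiff.1 hx').1
    have hK' : K = J ∪ (K \ J) := (Finset.union_sdiff_of_subset hJ).symm
    have hdisj2 : Disjoint J (K \ J) := Finset.disjoint_sdiff
    have h1 : tau J (I \ J) = tau J (I \ K) + tau J (K \ J) := by
      rw [hIJ, tau_union_right hdisj]
    have h2 : tau K (I \ K) = tau J (I \ K) + tau (K \ J) (I \ K) := by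
      have := tau_union_left (C := I \ K) hdisj2
      rwa [← hK'] at this
    rw [h1, h2]
    ring_nf
    rw [pow_mul', neg_one_sq, one_pow, mul_one]
  rw [Finset.sum_congr rfl key, ← Finset.mul_sum]
  have : ∑ J ∈ K.powerset, (-1 : ℤ) ^ (K \ J).card
      = ∑ J ∈ K.powerset, (-1 : ℤ) ^ J.card := by
    apply Finset.sum_nbij' (fun J => K \ J) (fun J => K \ J) <;>
      intro J hJ <;> rw [Finset.mem_powerset] at * <;>
      simp [Finset.sdiff_sdiff_self_left, Finset.inf_eq_inter,
        Finset.inter_eq_right.2 hJ, Finset.sdiff_subset]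
  rw [this, Finset.sum_powerset_neg_one_pow_card_of_nonempty hK, mul_zero]
end

section
/- Let I be a finite set of natural numbers with increasing enumeration l_1 < l_2 < ... < l_k, let s ∈ {1,...,k}, and let J ⊆ I be a subset containing l_s. If q is the position of l_s in the increasing enumeration of J (i.e., l_s is the q-th smallest element of J), then τ(J, I\J) = (s - q) + τ(J\{l_s}, I\J), where τ(A,B) counts pairs (a,b) ∈ A × B with a > b. -/
lemma tau_insert (A B : Finset ℕ) (x : ℕ) (hx : x ∉ A) :
    tau (insert x A) B = (B.filter (· < x)).card + tau A B := by
  unfold tau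
  rw [Finset.insert_eq, Finset.union_product, Finset.filter_union,
    Finset.card_union_of_disjoint]
  · congr 1
    rw [Finset.singleton_product, Finset.filter_map, Finset.card_map]
    rfl
  · apply Finset.disjoint_filter_filter
    rw [Finset.singleton_product, Finset.disjoint_left]
    rintro ⟨a, b⟩ h h2
    simp only [Finset.mem_map, Function.Embedding.coeFn_mk, Prod.mk.injEq] at h
    obtain ⟨c, _, rfl, rfl⟩ := h
    exact hx (Finset.mem_product.1 h2).1

/-- Let `I` be a finite set of naturals, `x ∈ J ⊆ I`.  If `s` is the position of `x`
in the increasing enumeration of `I` (i.e. `s = #{y ∈ I | y ≤ x}`) and `q` is the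
position of `x` in the increasing enumeration of `J`, then
`τ(J, I\J) = (s - q) + τ(J \ {x}, I \ J)`. -/
theorem stmt3 (I J : Finset ℕ) (x : ℕ) (hJI : J ⊆ I) (hxJ : x ∈ J) :
    (tau J (I \ J) : ℤ) =
      (((I.filter (· ≤ x)).card : ℤ) - ((J.filter (· ≤ x)).card : ℤ))
        + (tau (J.erase x) (I \ J) : ℤ) := by
  have h1 : tau J (I \ J) = ((I \ J).filter (· < x)).card + tau (J.erase x) (I \ J) := by
    have h := tau_insert (J.erase x) (I \ J) x (Finset.notMem_erase _ _)
    rwa [Finset.insert_erase hxJ] at h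
  have h2 : (I.filter (· ≤ x)).card = (J.filter (· ≤ x)).card + ((I \ J).filter (· ≤ x)).card := by
    rw [← Finset.card_union_of_disjoint, ← Finset.filter_union, Finset.union_sdiff_of_subset hJI]
    exact Finset.disjoint_filter_filter (Finset.disjoint_sdiff)
  have h3 : (I \ J).filter (· ≤ x) = (I \ J).filter (· < x) := by
    apply Finset.filter_congr
    intro y hy
    have hyx : y ≠ x := fun h => (Finset.mem_sdiff.1 hy).2 (h ▸ hxJ)
    simp [lt_iff_le_and_ne, hyx]
  rw [h1, h2, h3]
  push_cast
  ring
end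

section
/- Let B and B' be unital associative algebras over ℂ with B' having a countable basis, let M' be a simple B'-module, and let M be a B-module. Then every (B ⊗ B')-submodule of M ⊗ M' is of the form N ⊗ M' for some B-submodule N of M. -/
/-!
A `(B ⊗ B')`-submodule `P` is in particular stable under `id ⊗ r` for `r ∈ B'`. By Schur's lemma
`End_{B'} M'` is a division algebra over `ℂ`, and its dimension is countable, since it embeds
into `M'` (a quotient of `B'`) by evaluation at a nonzero vector. A transcendental element `d`
would give the `ℂ`-linearly independent family `(d - a)⁻¹`, `a ∈ ℂ`, of uncountable size
(computed in the field formed by the double centralizer of `d`), so `End_{B'} M' = ℂ`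
(Dixmier's lemma). The Jacobson density theorem then lets the action of `B'`
imitate any `ℂ`-linear endomorphism of `M'` on finitely many vectors, so `P` is stable under all
`id ⊗ f`. Expanding `z ∈ P` as `∑ mᵢ ⊗ eᵢ` in a basis `(eᵢ)` of `M'` and applying
`f = v ↦ eᵢ*(v) • w` shows `mᵢ ⊗ w ∈ P` for all `w`, i.e. `mᵢ ∈ N := {m | m ⊗ M' ⊆ P}`.
-/

open TensorProduct Cardinal

universe u v w

theorem isField_centralizer_centralizer_singleton {K D : Type*} [CommSemiring K] [DivisionRing D]
    [Algebra K D] (d : D) :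
    IsField (Subalgebra.centralizer K (Set.centralizer ({d} : Set D))) where
  exists_pair_ne := ⟨0, 1, zero_ne_one⟩
  mul_comm a b := Subtype.ext <|
    Set.centralizer_centralizer_comm_of_comm (by simp) _ a.2 _ b.2
  mul_inv_cancel {a} ha :=
    ⟨⟨(a : D)⁻¹, Set.inv_mem_centralizer₀ a.2⟩,
      Subtype.ext <| mul_inv_cancel₀ fun h ↦ ha (Subtype.ext h)⟩

section DivisionAlgebra

variable {K : Type u} {D : Type v} [Field K] [DivisionRing D] [Algebra K D]

theorem Transcendental.linearIndependent_sub_inv_of_divisionRing {d : D}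
    (hd : Transcendental K d) :
    LinearIndependent K fun a : K ↦ (d - algebraMap K D a)⁻¹ := by
  let Z := Subalgebra.centralizer K (Set.centralizer ({d} : Set D))
  let _ : Field Z := (isField_centralizer_centralizer_singleton d).toField
  let dZ : Z := ⟨d, Set.subset_centralizer_centralizer rfl⟩
  have hdZ : Transcendental K dZ :=
    (isAlgebraic_algHom_iff Z.val Subtype.val_injective).not.mp hd
  have hval : (fun a : K ↦ (d - algebraMap K D a)⁻¹) =
      Z.val ∘ fun a : K ↦ (dZ - algebraMap K Z a)⁻¹ := by
    funext a
    rw [Function.comp_apply, map_inv₀, map_sub, AlgHom.commutes]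
    rfl
  rw [hval]
  exact hdZ.linearIndependent_sub_inv.map' Z.val.toLinearMap
    (LinearMap.ker_eq_bot.mpr Subtype.val_injective)

theorem Algebra.IsAlgebraic.of_lift_rank_lt (h : lift.{u} (Module.rank K D) < lift.{v} #K) :
    Algebra.IsAlgebraic K D :=
  ⟨fun _ ↦ not_not.mp fun hd ↦ h.not_ge
    (Transcendental.linearIndependent_sub_inv_of_divisionRing hd).cardinal_lift_le_rank⟩

theorem algebraMap_surjective_of_lift_rank_lt [IsAlgClosed K]
    (h : lift.{u} (Module.rank K D) < lift.{v} #K) :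
    Function.Surjective (algebraMap K D) :=
  have := Algebra.IsAlgebraic.of_lift_rank_lt h
  IsAlgClosed.algebraMap_bijective_of_isIntegral.2

end DivisionAlgebra

section SimpleModule

variable {K : Type u} {A : Type v} {M : Type w} [Field K] [Ring A] [Algebra K A]
  [AddCommGroup M] [Module K M] [Module A M] [IsScalarTower K A M] [SMulCommClass A K M]
  [IsSimpleModule A M]

theorem IsSimpleModule.lift_rank_end_le :
    lift.{v} (Module.rank K (Module.End A M)) ≤ lift.{w} (Module.rank K A) := by
  have := IsSimpleModule.nontrivial A M
  obtain ⟨x, hx⟩ := exists_ne (0 : M)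
  let eval : Module.End A M →ₗ[K] M :=
    { toFun := fun f ↦ f x, map_add' := fun _ _ ↦ rfl, map_smul' := fun _ _ ↦ rfl }
  have eval_injective : Function.Injective eval := fun f g hfg ↦ by
    refine sub_eq_zero.mp ((f - g).injective_or_eq_zero.resolve_left fun hinj ↦ hx ?_)
    exact hinj (by simpa [eval, sub_eq_zero] using hfg)
  calc lift.{v} (Module.rank K (Module.End A M))
      ≤ lift.{v} (Module.rank K M) := lift_le.2 (eval.rank_le_of_injective eval_injective)
    _ ≤ lift.{w} (Module.rank K A) :=
      ((LinearMap.toSpanSingleton A M x).restrictScalars K).lift_rank_le_of_surjective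
        (IsSimpleModule.toSpanSingleton_surjective A hx)

theorem IsSimpleModule.algebraMap_end_surjective [IsAlgClosed K]
    (h : lift.{u} (Module.rank K A) < lift.{v} #K) :
    Function.Surjective (algebraMap K (Module.End A M)) := by
  classical
  refine algebraMap_surjective_of_lift_rank_lt (lift_lt.1 ?_)
  calc lift.{v} (lift.{u} (Module.rank K (Module.End A M)))
      = lift.{u} (lift.{v} (Module.rank K (Module.End A M))) := by simp
    _ ≤ lift.{u} (lift.{w} (Module.rank K A)) := lift_le.2 IsSimpleModule.lift_rank_end_le
    _ < lift.{v} (lift.{w} #K) := by simpa using lift_lt.{max u v, w}.2 h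

end SimpleModule

section Density

variable {K A M : Type*} [CommSemiring K] [Ring A] [Algebra K A] [AddCommGroup M] [Module K M]
  [Module A M] [IsScalarTower K A M] [SMulCommClass A K M] [IsSemisimpleModule A M]

theorem exists_smul_eq_of_algebraMap_end_surjective
    (h : Function.Surjective (algebraMap K (Module.End A M))) (f : M →ₗ[K] M) (s : Finset M) :
    ∃ r : A, ∀ m ∈ s, f m = r • m :=
  jacobson_density
    { f.toAddMonoidHom with
      map_smul' := fun g m ↦ by
        obtain ⟨c, rfl⟩ := h g
        simp }
    s

theorem exists_lTensor_smul_eq_of_algebraMap_end_surjective {N : Type*} [AddCommGroup N]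
    [Module K N] (h : Function.Surjective (algebraMap K (Module.End A M))) (f : M →ₗ[K] M)
    (z : N ⊗[K] M) :
    ∃ r : A, (DistribSMul.toLinearMap K M r).lTensor N z = f.lTensor N z := by
  classical
  obtain ⟨S, rfl⟩ := TensorProduct.exists_finset z
  obtain ⟨r, hr⟩ := exists_smul_eq_of_algebraMap_end_surjective h f (S.image Prod.snd)
  refine ⟨r, ?_⟩
  simp only [map_sum, LinearMap.lTensor_tmul, DistribSMul.toLinearMap_apply]
  exact Finset.sum_congr rfl fun p hp ↦ by rw [hr _ (Finset.mem_image_of_mem _ hp)]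

end Density

theorem Module.Basis.lTensor_coord_smulRight_sum_tmul {R M V ι : Type*} [CommRing R]
    [AddCommGroup M] [Module R M] [AddCommGroup V] [Module R V] (b : Module.Basis ι R V)
    (c : ι →₀ M) (i : ι) (w : V) :
    ((b.coord i).smulRight w).lTensor M (c.sum fun j m ↦ m ⊗ₜ[R] b j) = c i ⊗ₜ w := by
  rw [map_finsuppSum]
  exact (Finsupp.sum_eq_single i (fun j _ hj ↦ by simp [hj]) fun _ ↦ by simp).trans (by simp)

theorem Submodule.eq_range_map_subtype_of_lTensor_mem {K M V : Type*} [Field K]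
    [AddCommGroup M] [Module K M] [AddCommGroup V] [Module K V] (P : Submodule K (M ⊗[K] V))
    (hP : ∀ f : V →ₗ[K] V, ∀ z ∈ P, f.lTensor M z ∈ P)
    (N : Submodule K M) (hN : ∀ m, m ∈ N ↔ ∀ w, m ⊗ₜ[K] w ∈ P) :
    P = LinearMap.range (TensorProduct.map N.subtype (LinearMap.id : V →ₗ[K] V)) := by
  apply le_antisymm
  · intro z hz
    let b := Module.Basis.ofVectorSpace K V
    obtain ⟨c, rfl⟩ := TensorProduct.eq_repr_basis_right b z
    have coeff_mem : ∀ i, c i ∈ N := fun i ↦ (hN _).2 fun w ↦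
      b.lTensor_coord_smulRight_sum_tmul c i w ▸ hP _ _ hz
    exact Submodule.finsuppSum_mem _ _ _ _ fun i _ ↦ ⟨⟨c i, coeff_mem i⟩ ⊗ₜ b i, rfl⟩
  · rw [TensorProduct.range_map_eq_span_tmul, Submodule.span_le]
    rintro _ ⟨m, w, rfl⟩
    exact (hN m).1 m.2 w

/-- Let `B, B'` be unital associative `ℂ`-algebras with `B'` having a countable basis, let
`M'` be a simple `B'`-module and `M` a `B`-module.  A `(B ⊗ B')`-submodule of `M ⊗ M'`
is a `ℂ`-subspace invariant under the actions of `B` (on the first factor) and of `B'`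
(on the second factor).  Every such submodule is of the form `N ⊗ M'` for some
`B`-submodule `N` of `M`. -/
theorem stmt4 (B B' M M' : Type*) [Ring B] [Algebra ℂ B] [Ring B'] [Algebra ℂ B']
    [AddCommGroup M] [Module ℂ M] [Module B M]
    [IsScalarTower ℂ B M] [SMulCommClass B ℂ M]
    [AddCommGroup M'] [Module ℂ M'] [Module B' M']
    [IsScalarTower ℂ B' M'] [SMulCommClass B' ℂ M']
    (ι : Type*) [Countable ι] (bas : Module.Basis ι ℂ B')
    [IsSimpleModule B' M']
    (P : Submodule ℂ (M ⊗[ℂ] M'))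
    (hB : ∀ (b : B), ∀ z ∈ P,
      LinearMap.rTensor M' (DistribMulAction.toLinearMap ℂ M b) z ∈ P)
    (hB' : ∀ (b' : B'), ∀ z ∈ P,
      LinearMap.lTensor M (DistribMulAction.toLinearMap ℂ M' b') z ∈ P) :
    ∃ N : Submodule B M,
      P = LinearMap.range
        (TensorProduct.map (N.restrictScalars ℂ).subtype
          (LinearMap.id : M' →ₗ[ℂ] M')) := by
  have rank_le : Module.rank ℂ B' ≤ ℵ₀ := by
    rw [← lift_le_aleph0, ← bas.mk_eq_rank]
    exact lift_le_aleph0.2 mk_le_aleph0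
  have end_scalar := IsSimpleModule.algebraMap_end_surjective (K := ℂ) (A := B') (M := M') (by
    simpa [mk_complex] using rank_le.trans_lt aleph0_lt_continuum)
  let N : Submodule B M :=
    { carrier := {m | ∀ w, m ⊗ₜ[ℂ] w ∈ P}
      add_mem' := fun ha hb w ↦ by rw [add_tmul]; exact P.add_mem (ha w) (hb w)
      zero_mem' := fun w ↦ by rw [zero_tmul]; exact P.zero_mem
      smul_mem' := fun b m hm w ↦ hB b _ (hm w) }
  refine ⟨N, P.eq_range_map_subtype_of_lTensor_mem (fun f z hz ↦ ?_) _ fun _ ↦ Iff.rfl⟩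
  obtain ⟨r, hr⟩ := exists_lTensor_smul_eq_of_algebraMap_end_surjective end_scalar f z
  exact hr ▸ hB' r z hz
end

section
/- Let W = W_{m,n} be the ℤ^m-graded Lie superalgebra of superderivations of A_{m,n} = ℂ[t_1^{±1},...,t_m^{±1}] ⊗ Λ(ξ_1,...,ξ_n), with graded component W_α spanned by t^α ξ_I d_i and t^α ξ_I ∂/∂ξ_j for I ⊆ {1,...,n}, 1 ≤ i ≤ m, 1 ≤ j ≤ n. Then for all α, β ∈ ℤ^m with β ≠ 0, the bracket satisfies [W_α, W_β] = W_{α+β}. -/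
/-! ### A concrete model of `A_{m,n}` and of the Witt superalgebra `W_{m,n}`

`A_{m,n} = ℂ[t₁^{±1},…,t_m^{±1}] ⊗ Λ(ξ₁,…,ξ_n)` has basis the monomials `t^α ξ_I`,
indexed by `AIdx m n = (Fin m → ℤ) × Finset (Fin n)`.  The Witt superalgebra
`W_{m,n}` of superderivations of `A_{m,n}` has basis `t^α ξ_I d_i` and
`t^α ξ_I ∂/∂ξ_j` (`d_i = t_i ∂/∂t_i`), indexed by
`WIdx m n = (Fin m → ℤ) × Finset (Fin n) × (Fin m ⊕ Fin n)`. -/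

/-- Inversion count: number of pairs `(a,b) ∈ I × J` with `a > b`. -/
def tauF {n : ℕ} (I J : Finset (Fin n)) : ℕ :=
  ((I ×ˢ J).filter fun p => p.2 < p.1).card

/-- The sign arising from `ξ_I · ξ_J = ε(I,J) ξ_{I ∪ J}`:  `(-1)^{τ(I,J)}` when `I, J`
are disjoint and `0` otherwise. -/
noncomputable def epsF {n : ℕ} (I J : Finset (Fin n)) : ℂ :=
  if Disjoint I J then (-1 : ℂ) ^ tauF I J else 0

/-- Index set of the monomial basis `t^α ξ_I` of `A_{m,n}`. -/
abbrev AIdx (m n : ℕ) := (Fin m → ℤ) × Finset (Fin n)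

/-- The underlying vector space of `A_{m,n}`. -/
abbrev ASp (m n : ℕ) := AIdx m n →₀ ℂ

/-- Index set of the basis `t^α ξ_I ∂` (`∂ = d_i` or `∂/∂ξ_j`) of `W_{m,n}`. -/
abbrev WIdx (m n : ℕ) := (Fin m → ℤ) × Finset (Fin n) × (Fin m ⊕ Fin n)

/-- The underlying vector space of `W_{m,n}`. -/
abbrev WSp (m n : ℕ) := WIdx m n →₀ ℂ

/-- Product of two monomials of `A_{m,n}`. -/
noncomputable def mulMono {m n : ℕ} (u v : AIdx m n) : ASp m n :=
  epsF u.2 v.2 • Finsupp.single (u.1 + v.1, u.2 ∪ v.2) 1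

/-- The (supercommutative) multiplication of `A_{m,n}`, as a bilinear map. -/
noncomputable def mulA (m n : ℕ) : ASp m n →ₗ[ℂ] ASp m n →ₗ[ℂ] ASp m n :=
  Finsupp.lsum ℂ fun u => LinearMap.toSpanSingleton ℂ _
    (Finsupp.lsum ℂ fun v => LinearMap.toSpanSingleton ℂ _ (mulMono u v))

/-- A monomial of `A_{m,n}` multiplied with a basis element of `W_{m,n}`. -/
noncomputable def smulMonoW {m n : ℕ} (u : AIdx m n) (w : WIdx m n) : WSp m n :=
  epsF u.2 w.2.1 • Finsupp.single (u.1 + w.1, u.2 ∪ w.2.1, w.2.2) 1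

/-- The action of `A_{m,n}` on `W_{m,n} = A_{m,n} Δ` by multiplication, bilinear. -/
noncomputable def smulAW (m n : ℕ) : ASp m n →ₗ[ℂ] WSp m n →ₗ[ℂ] WSp m n :=
  Finsupp.lsum ℂ fun u => LinearMap.toSpanSingleton ℂ _
    (Finsupp.lsum ℂ fun w => LinearMap.toSpanSingleton ℂ _ (smulMonoW u w))

/-- The scalar produced when the derivation part `c` (`d_i` or `∂/∂ξ_j`) hits the
monomial `t^β ξ_J`. -/
noncomputable def dCoeff {m n : ℕ} (c : Fin m ⊕ Fin n) (β : Fin m → ℤ) (J : Finset (Fin n)) : ℂ :=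
  match c with
  | Sum.inl i => (β i : ℂ)
  | Sum.inr j => if j ∈ J then (-1 : ℂ) ^ ((J.filter (· < j)).card) else 0

/-- The `ξ`-part of the monomial after applying the derivation part `c`. -/
def dSet {m n : ℕ} (c : Fin m ⊕ Fin n) (J : Finset (Fin n)) : Finset (Fin n) :=
  match c with
  | Sum.inl _ => J
  | Sum.inr j => J.erase j

/-- The basis superderivation `t^α ξ_I ∂` (index `u`) applied to the monomial
`t^β ξ_J` (index `v`), as an element of `A_{m,n}`. -/
noncomputable def derMono {m n : ℕ} (u : WIdx m n) (v : AIdx m n) : ASp m n :=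
  dCoeff u.2.2 v.1 v.2 • mulMono (u.1, u.2.1) (v.1, dSet u.2.2 v.2)

/-- The parity of a basis element `t^α ξ_I ∂` of `W_{m,n}`: `|I|` plus the parity of
the derivation part. -/
def parWIdx {m n : ℕ} (u : WIdx m n) : ℕ :=
  u.2.1.card + (match u.2.2 with | Sum.inl _ => 0 | Sum.inr _ => 1)

/-- Attach a derivation part `b` to an element of `A_{m,n}`: `a ↦ a ∂_b`. -/
noncomputable def attachD {m n : ℕ} (b : Fin m ⊕ Fin n) : ASp m n →ₗ[ℂ] WSp m n :=
  Finsupp.lmapDomain ℂ ℂ (fun a => (a.1, a.2, b))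

/-- The superbracket of two basis elements `x = t^α ξ_I ∂_a`, `y = t^β ξ_J ∂_b`:
`[x, y] = x(t^β ξ_J) ∂_b − (−1)^{|x||y|} y(t^α ξ_I) ∂_a`. -/
noncomputable def bracketMono {m n : ℕ} (u v : WIdx m n) : WSp m n :=
  attachD v.2.2 (derMono u (v.1, v.2.1)) -
    ((-1 : ℂ) ^ (parWIdx u * parWIdx v)) • attachD u.2.2 (derMono v (u.1, u.2.1))

/-- The superbracket of `W_{m,n}`, as a bilinear map. -/
noncomputable def bracketW (m n : ℕ) : WSp m n →ₗ[ℂ] WSp m n →ₗ[ℂ] WSp m n :=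
  Finsupp.lsum ℂ fun u => LinearMap.toSpanSingleton ℂ _
    (Finsupp.lsum ℂ fun v => LinearMap.toSpanSingleton ℂ _ (bracketMono u v))

/-- The `ℤ^m`-graded component `(W_{m,n})_α`, spanned by `t^α ξ_I d_i` and
`t^α ξ_I ∂/∂ξ_j`. -/
noncomputable def Wgr (m n : ℕ) (α : Fin m → ℤ) : Submodule ℂ (WSp m n) :=
  Submodule.span ℂ
    {w | ∃ (I : Finset (Fin n)) (c : Fin m ⊕ Fin n), w = Finsupp.single (α, I, c) 1}

/-- The (`ℤ₂`-)homogeneous component of `W_{m,n}` of parity `p`. -/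
noncomputable def Wpar (m n : ℕ) (p : ℕ) : Submodule ℂ (WSp m n) :=
  Submodule.span ℂ
    {w | ∃ u : WIdx m n, parWIdx u % 2 = p % 2 ∧ w = Finsupp.single u 1}

/-! ### auxiliary lemmas -/


lemma bracketW_single {m n : ℕ} (u v : WIdx m n) :
    bracketW m n (Finsupp.single u 1) (Finsupp.single v 1) = bracketMono u v := by
  simp [bracketW, Finsupp.lsum_single, LinearMap.toSpanSingleton_apply]

lemma attachD_single {m n : ℕ} (b : Fin m ⊕ Fin n) (a : AIdx m n) (c : ℂ) :
    attachD (m := m) (n := n) b (Finsupp.single a c) = Finsupp.single (a.1, a.2, b) c := by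
  simp [attachD, Finsupp.lmapDomain_apply, Finsupp.mapDomain_single]

lemma single_mem_Wgr {m n : ℕ} (γ : Fin m → ℤ) (I : Finset (Fin n)) (c : Fin m ⊕ Fin n) :
    Finsupp.single (γ, I, c) (1 : ℂ) ∈ Wgr m n γ :=
  Submodule.subset_span ⟨I, c, rfl⟩

lemma epsF_empty_left {n : ℕ} (K : Finset (Fin n)) : epsF ∅ K = 1 := by
  simp [epsF, tauF]

lemma epsF_empty_right {n : ℕ} (K : Finset (Fin n)) : epsF K ∅ = 1 := by
  simp [epsF, tauF]

lemma derMono_eq {m n : ℕ} (u : WIdx m n) (v : AIdx m n) :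
    derMono u v = (dCoeff u.2.2 v.1 v.2 * epsF u.2.1 (dSet u.2.2 v.2)) •
      Finsupp.single (u.1 + v.1, u.2.1 ∪ dSet u.2.2 v.2) 1 := by
  simp [derMono, mulMono, smul_smul]

lemma attachD_derMono_mem {m n : ℕ} (b : Fin m ⊕ Fin n) (u : WIdx m n) (v : AIdx m n) :
    attachD b (derMono u v) ∈ Wgr m n (u.1 + v.1) := by
  rw [derMono_eq, map_smul, attachD_single]
  exact Submodule.smul_mem _ _ (single_mem_Wgr _ _ _)

lemma bracketMono_mem {m n : ℕ} (α β : Fin m → ℤ) (I J : Finset (Fin n))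
    (a b : Fin m ⊕ Fin n) :
    bracketMono (m := m) (n := n) (α, I, a) (β, J, b) ∈ Wgr m n (α + β) := by
  refine Submodule.sub_mem _ ?_ (Submodule.smul_mem _ _ ?_)
  · exact attachD_derMono_mem b (α, I, a) (β, J)
  · have : β + α = α + β := add_comm β α
    have h := attachD_derMono_mem (m := m) (n := n) a (β, J, b) (α, I)
    simpa [this] using h

/-- For the `ℤ^m`-graded Witt superalgebra `W = W_{m,n}` (`m, n ≥ 1`) and any
`α, β ∈ ℤ^m` with `β ≠ 0`, the bracket satisfies `[W_α, W_β] = W_{α+β}`, i.e. the span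
of all brackets of elements of `W_α` with elements of `W_β` is the whole graded
component `W_{α+β}`. -/
theorem stmt6 (m n : ℕ) (hm : 0 < m) (hn : 0 < n) (α β : Fin m → ℤ) (hβ : β ≠ 0) :
    Submodule.span ℂ
        {z : WSp m n | ∃ x ∈ Wgr m n α, ∃ y ∈ Wgr m n β, z = bracketW m n x y}
      = Wgr m n (α + β) := by
  apply le_antisymm
  · rw [Submodule.span_le]
    rintro z ⟨x, hx, y, hy, rfl⟩
    induction hx using Submodule.span_induction with
    | mem x hx =>
      obtain ⟨I, a, rfl⟩ := hx
      induction hy using Submodule.span_induction with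
      | mem y hy =>
        obtain ⟨J, b, rfl⟩ := hy
        rw [bracketW_single]
        exact bracketMono_mem α β I J a b
      | zero => simp
      | add y₁ y₂ h₁ h₂ ih₁ ih₂ =>
        rw [map_add]; exact Submodule.add_mem _ ih₁ ih₂
      | smul c y h ih =>
        rw [map_smul]; exact Submodule.smul_mem _ _ ih
    | zero => simp
    | add x₁ x₂ h₁ h₂ ih₁ ih₂ =>
      rw [map_add, LinearMap.add_apply]; exact Submodule.add_mem _ ih₁ ih₂
    | smul c x h ih =>
      rw [map_smul, LinearMap.smul_apply]; exact Submodule.smul_mem _ _ ih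
  · -- reverse inclusion
    set S := Submodule.span ℂ
        {z : WSp m n | ∃ x ∈ Wgr m n α, ∃ y ∈ Wgr m n β, z = bracketW m n x y} with hS
    obtain ⟨i, hi⟩ := Function.ne_iff.mp hβ
    have hi' : (β i : ℂ) ≠ 0 := by exact_mod_cast hi
    have hbr : ∀ (u v : WIdx m n), u.1 = α → v.1 = β → bracketMono u v ∈ S := by
      rintro ⟨γ, I, a⟩ ⟨δ, J, b⟩ rfl rfl
      refine Submodule.subset_span ⟨_, single_mem_Wgr _ I a, _, single_mem_Wgr _ J b, ?_⟩
      rw [bracketW_single]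
    -- Step A: all `inr` basis elements of W_{α+β} lie in S
    have stepA : ∀ (K : Finset (Fin n)) (j : Fin n),
        Finsupp.single ((α + β), K, Sum.inr j) (1 : ℂ) ∈ S := by
      intro K j
      have h := hbr (α, ∅, Sum.inl i) (β, K, Sum.inr j) rfl rfl
      have hcomp : bracketMono (m := m) (n := n) (α, ∅, Sum.inl i) (β, K, Sum.inr j)
          = (β i : ℂ) • Finsupp.single ((α + β), K, Sum.inr j) 1 := by
        rw [bracketMono, derMono_eq, derMono_eq]
        simp [dCoeff, dSet, epsF_empty_left, attachD_single]
      rw [hcomp] at h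
      have := Submodule.smul_mem S ((β i : ℂ)⁻¹) h
      rwa [smul_smul, inv_mul_cancel₀ hi', one_smul] at this
    rw [Wgr, Submodule.span_le]
    rintro w ⟨K, c, rfl⟩
    match c with
    | Sum.inr j => exact stepA K j
    | Sum.inl i' =>
      have j : Fin n := ⟨0, hn⟩
      have h := hbr (α, K, Sum.inr j) (β, {j}, Sum.inl i') rfl rfl
      have hcomp : bracketMono (m := m) (n := n) (α, K, Sum.inr j) (β, {j}, Sum.inl i')
          = Finsupp.single ((α + β), K, Sum.inl i') 1
            - ((-1 : ℂ) ^ (parWIdx (m := m) (n := n) (α, K, Sum.inr j) *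
                parWIdx (m := m) (n := n) (β, {j}, Sum.inl i'))
              * ((α i' : ℂ) * epsF {j} K)) •
              Finsupp.single ((α + β), {j} ∪ K, Sum.inr j) 1 := by
        have e1 : dCoeff (m := m) (Sum.inr j) β {j} = 1 := by
          simp [dCoeff, Finset.filter_singleton]
        have e2 : dSet (m := m) (Sum.inr j) {j} = (∅ : Finset (Fin n)) := by
          simp [dSet]
        have e3 : dCoeff (m := m) (Sum.inl i') α K = (α i' : ℂ) := rfl
        have e4 : dSet (m := m) (n := n) (Sum.inl i') K = K := rfl
        have hba : β + α = α + β := add_comm β α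
        rw [bracketMono, derMono_eq, derMono_eq, map_smul, map_smul, attachD_single,
          attachD_single]
        simp only [e1, e2, e3, e4, hba, Finset.union_empty, epsF_empty_right, one_mul,
          mul_one, one_smul, smul_smul]
      rw [hcomp] at h
      have h2 := Submodule.add_mem S h
        (Submodule.smul_mem S
          ((-1 : ℂ) ^ (parWIdx (m := m) (n := n) (α, K, Sum.inr j) *
              parWIdx (m := m) (n := n) (β, {j}, Sum.inl i'))
            * ((α i' : ℂ) * epsF {j} K)) (stepA ({j} ∪ K) j))
      simpa [sub_add_cancel] using h2
end

section
/- In the Weyl superalgebra K_{m,n} (generated by the Laurent polynomial superalgebra A_{m,n} and the superderivations d_i = t_i∂/∂t_i, ∂/∂ξ_j), for each λ ∈ ℂ^m, the module A(λ) — which is A_{m,n} as a vector space with d_i acting as d_i + λ_i, ∂/∂ξ_j acting naturally, and A_{m,n} acting by multiplication — is a strictly simple K_{m,n}-module (it has no invariant subspaces, graded or not, other than 0 and itself). -/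
/-- The operator `d_i + λ_i` ingredient: the derivation `d_i = t_i ∂/∂t_i` of
`A_{m,n}`, acting on the monomial `t^β ξ_J` by the scalar `β_i`. -/
noncomputable def dOpA (m n : ℕ) (i : Fin m) : Module.End ℂ (ASp m n) :=
  Finsupp.lsum ℂ fun u => LinearMap.toSpanSingleton ℂ _
    ((u.1 i : ℂ) • (Finsupp.single u 1 : ASp m n))

/-- The odd superderivation `∂/∂ξ_j` of `A_{m,n}`. -/
noncomputable def xiOpA (m n : ℕ) (j : Fin n) : Module.End ℂ (ASp m n) :=
  Finsupp.lsum ℂ fun u => LinearMap.toSpanSingleton ℂ _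
    (if j ∈ u.2 then
      ((-1 : ℂ) ^ ((u.2.filter (· < j)).card)) •
        (Finsupp.single (u.1, u.2.erase j) 1 : ASp m n)
     else 0)

/-- The homogeneous component of `A_{m,n}` of parity `q ∈ ℤ₂`. -/
noncomputable def Apar (m n : ℕ) (q : ZMod 2) : Submodule ℂ (ASp m n) :=
  Submodule.span ℂ
    {a | ∃ u : AIdx m n, ((u.2.card : ZMod 2) = q) ∧ a = Finsupp.single u 1}

/-! Let `P` be a nonzero invariant subspace. Applying `∂/∂ξ_j` to an element with a monomial
`t^β ξ_I`, `j ∈ I`, gives a nonzero element (only `ξ_I` contributes to `ξ_{I∖{j}}`) of smaller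
`ξ`-degree, so `P` contains a nonzero element free of `ξ`. Since `d_i = (d_i + λ_i) - λ_i` acts
diagonally on monomials, subtracting an eigenvalue separates `ℤ^m`-weights, which leaves a nonzero
multiple of a single `t^β` in `P`. Multiplication by `A_{m,n}` then produces every monomial. -/

open Finsupp

section DiagonalOperators

variable {ι κ K : Type*} [Field K]

theorem Finsupp.single_one_mem_of_support_subset {P : Submodule K (ι →₀ K)} {x : ι →₀ K}
    {u : ι} (hxP : x ∈ P) (hx0 : x ≠ 0) (hxu : x.support ⊆ {u}) : single u 1 ∈ P := by
  obtain ⟨c, rfl⟩ := support_subset_singleton'.mp hxu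
  have hc : c ≠ 0 := by rintro rfl; exact hx0 (single_zero u)
  simpa [smul_single, hc] using P.smul_mem c⁻¹ hxP

theorem Finsupp.exists_ne_zero_mem_weight_eq (w : ι → κ → K) {P : Submodule K (ι →₀ K)}
    (hP : ∀ k, ∀ x ∈ P, (fun v => w v k) • x ∈ P) {x : ι →₀ K} (hxP : x ∈ P) (hx0 : x ≠ 0) :
    ∃ y ∈ P, y ≠ 0 ∧ y.support ⊆ x.support ∧ ∃ c, ∀ v ∈ y.support, w v = c := by
  classical
  induction hN : (x.support.image w).card using Nat.strong_induction_on generalizing x with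
  | _ N ih =>
  by_cases hconst : ∃ c, ∀ v ∈ x.support, w v = c
  · exact ⟨x, hxP, hx0, subset_rfl, hconst⟩
  push Not at hconst
  obtain ⟨v₁, hv₁⟩ := support_nonempty_iff.mpr hx0
  obtain ⟨v₂, hv₂, hne⟩ := hconst (w v₁)
  obtain ⟨k, hk⟩ := Function.ne_iff.mp hne
  -- kills the fibre of `w v₂` and keeps `v₁`
  set y := (fun v => w v k) • x - w v₂ k • x with hy_def
  have hy : ∀ v, y v = (w v k - w v₂ k) * x v := fun v => by
    simp [hy_def, coe_pointwise_smul, sub_mul]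
  have hyP : y ∈ P := sub_mem (hP k x hxP) (P.smul_mem _ hxP)
  have hy0 : y ≠ 0 := fun h => by
    simpa [hy, sub_eq_zero, hk.symm, mem_support_iff.mp hv₁] using DFunLike.congr_fun h v₁
  have hsupp : y.support ⊆ x.support := fun v hv =>
    mem_support_iff.mpr fun h => mem_support_iff.mp hv (by rw [hy, h, mul_zero])
  have himage : y.support.image w ⊂ x.support.image w := by
    refine Finset.ssubset_iff_of_subset (Finset.image_subset_image hsupp) |>.mpr
      ⟨w v₂, Finset.mem_image_of_mem w hv₂, fun h => ?_⟩
    obtain ⟨v, hv, hvw⟩ := Finset.mem_image.mp h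
    exact mem_support_iff.mp hv (by rw [hy, hvw, sub_self, zero_mul])
  obtain ⟨z, hzP, hz0, hzy, hz⟩ := ih _ (hN ▸ Finset.card_lt_card himage) hyP hy0 rfl
  exact ⟨z, hzP, hz0, hzy.trans hsupp, hz⟩

end DiagonalOperators

variable {m n : ℕ}

theorem dOpA_apply (i : Fin m) (x : ASp m n) (v : AIdx m n) :
    dOpA m n i x v = v.1 i * x v := by
  induction x using Finsupp.induction_linear with
  | zero => simp
  | add x y hx hy => simp only [map_add, Finsupp.add_apply, hx, hy, mul_add]
  | single u c => rcases eq_or_ne u v with rfl | h <;> simp [dOpA, *, mul_comm]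

theorem xiOpA_apply (j : Fin n) (x : ASp m n) (v : AIdx m n) :
    xiOpA m n j x v =
      if j ∈ v.2 then 0 else (-1) ^ (v.2.filter (· < j)).card * x (v.1, insert j v.2) := by
  induction x using Finsupp.induction_linear with
  | zero => simp
  | add x y hx hy => simp only [map_add, Finsupp.add_apply, hx, hy]; split_ifs <;> ring
  | single u c =>
    obtain ⟨β, J⟩ := v
    simp only [xiOpA, lsum_single, LinearMap.toSpanSingleton_apply]
    by_cases hju : j ∈ u.2
    · obtain ⟨α, I⟩ := u
      simp only [if_pos hju, smul_single, smul_eq_mul, mul_one]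
      by_cases hv : (α, I.erase j) = (β, J)
      · obtain ⟨rfl, rfl⟩ := Prod.mk.inj hv
        simp [Finset.filter_erase, Finset.insert_erase hju, mul_comm]
      · simp only [single_apply, hv, if_false, Prod.mk.injEq]
        split_ifs with hjJ h
        · rfl
        · exact absurd (by rw [h.1, h.2, Finset.erase_insert hjJ]) hv
        · rw [mul_zero]
    · have : u ≠ (β, insert j J) := by rintro rfl; simp at hju
      simp [hju, this]

theorem exists_ne_zero_mem_forall_xi_eq_empty {P : Submodule ℂ (ASp m n)}
    (hxi : ∀ j, ∀ x ∈ P, xiOpA m n j x ∈ P) {x : ASp m n} (hxP : x ∈ P) (hx0 : x ≠ 0) :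
    ∃ y ∈ P, y ≠ 0 ∧ ∀ v ∈ y.support, v.2 = ∅ := by
  suffices key : ∀ k, ∀ x ∈ P, x ≠ 0 → (∀ v ∈ x.support, v.2.card ≤ k) →
      ∃ y ∈ P, y ≠ 0 ∧ ∀ v ∈ y.support, v.2 = ∅ from
    key _ x hxP hx0 fun v hv => Finset.le_sup (f := fun v : AIdx m n => v.2.card) hv
  intro k
  induction k with
  | zero => exact fun x hxP hx0 hk =>
      ⟨x, hxP, hx0, fun v hv => Finset.card_eq_zero.mp (Nat.le_zero.mp (hk v hv))⟩
  | succ k ih =>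
    intro x hxP hx0 hk
    by_cases hempty : ∀ v ∈ x.support, v.2 = ∅
    · exact ⟨x, hxP, hx0, hempty⟩
    push Not at hempty
    obtain ⟨⟨β, I⟩, hv, j, hj⟩ := hempty
    refine ih (xiOpA m n j x) (hxi j x hxP) (fun h => ?_) fun v hv' => ?_
    · have := DFunLike.congr_fun h (β, I.erase j)
      simp [xiOpA_apply, Finset.insert_erase hj, mem_support_iff.mp hv] at this
    · rw [mem_support_iff, xiOpA_apply] at hv'
      split_ifs at hv' with hjv
      · exact absurd rfl hv'
      have := hk _ (mem_support_iff.mpr (right_ne_zero_of_mul hv'))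
      rw [Finset.card_insert_of_notMem hjv] at this
      omega

theorem mulA_single_one_single_one (u v : AIdx m n) :
    mulA m n (single u 1) (single v 1) = mulMono u v := by
  simp [mulA]

theorem mulMono_empty_right (u : AIdx m n) (β : Fin m → ℤ) :
    mulMono u (β, ∅) = single (u.1 + β, u.2) 1 := by
  simp [mulMono, epsF, tauF]

theorem eq_top_of_single_one_mem {P : Submodule ℂ (ASp m n)}
    (hA : ∀ a, ∀ x ∈ P, mulA m n a x ∈ P) {β : Fin m → ℤ} (hβ : single (β, ∅) 1 ∈ P) :
    P = ⊤ := by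
  rw [eq_top_iff, ← (Finsupp.basisSingleOne (R := ℂ) (ι := AIdx m n)).span_eq,
    Submodule.span_le]
  rintro _ ⟨⟨α, I⟩, rfl⟩
  simpa [mulA_single_one_single_one, mulMono_empty_right] using
    hA (single (α - β, I) 1) _ hβ

/-- For every `λ ∈ ℂ^m`, the module `A(λ)` over the Weyl superalgebra `K_{m,n}` —
which is `A_{m,n}` with `d_i` acting as `d_i + λ_i`, `∂/∂ξ_j` acting naturally and
`A_{m,n}` acting by multiplication — is strictly simple: it has no invariant subspaces
(graded or not) under all these operators other than `0` and the whole space. -/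
theorem stmt12 (m n : ℕ) (lam : Fin m → ℂ) (P : Submodule ℂ (ASp m n))
    (hA : ∀ (a : ASp m n), ∀ x ∈ P, mulA m n a x ∈ P)
    (hd : ∀ (i : Fin m), ∀ x ∈ P, dOpA m n i x + lam i • x ∈ P)
    (hxi : ∀ (j : Fin n), ∀ x ∈ P, xiOpA m n j x ∈ P) :
    P = ⊥ ∨ P = ⊤ := by
  refine or_iff_not_imp_left.mpr fun hP => ?_
  obtain ⟨x, hxP, hx0⟩ := Submodule.exists_mem_ne_zero_of_ne_bot hP
  obtain ⟨y, hyP, hy0, hy⟩ := exists_ne_zero_mem_forall_xi_eq_empty hxi hxP hx0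
  have hdP : ∀ i, ∀ x ∈ P, (fun v : AIdx m n => (v.1 i : ℂ)) • x ∈ P := fun i x hx => by
    convert sub_mem (hd i x hx) (P.smul_mem (lam i) hx) using 1
    ext v
    simp [coe_pointwise_smul, dOpA_apply]
  obtain ⟨z, hzP, hz0, hzy, c, hc⟩ :=
    exists_ne_zero_mem_weight_eq (fun (v : AIdx m n) (i : Fin m) => (v.1 i : ℂ)) hdP hyP hy0
  obtain ⟨⟨β, J⟩, hv₀⟩ := support_nonempty_iff.mpr hz0
  have hz : z.support ⊆ {(β, ∅)} := fun v hv => by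
    have hweight : v.1 = β := funext fun i =>
      Int.cast_injective (α := ℂ) (congrFun ((hc v hv).trans (hc _ hv₀).symm) i)
    rw [Finset.mem_singleton, ← hweight, ← hy v (hzy hv)]
  exact eq_top_of_single_one_mem hA (single_one_mem_of_support_subset hzP hz0 hz)
end

section
/- Let M be a weight module over the Witt algebra W_{1,0} = Der ℂ[t,t^{-1}] with finite-dimensional weight spaces and support contained in λ + ℤ for some λ ∈ ℂ. If for every v ∈ M there exists N(v) ∈ ℕ such that t^{i+1}(d/dt) · v = 0 for all i ≥ N(v), then the support of M is upper bounded: supp(M) ⊆ λ_0 − ℤ_{≥0} for some λ_0 ∈ ℂ. -/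
namespace Stmt14Aux

variable {V : Type*} [AddCommGroup V] [Module ℂ V] {L : ℤ → Module.End ℂ V} {lam : ℂ}

lemma comm_apply (hrep : ∀ i j : ℤ, L i * L j - L j * L i = (j - i) • L (i + j))
    (a b : ℤ) (v : V) :
    L a (L b v) = L b (L a v) + (b - a) • L (a + b) v := by
  have h := congrArg (fun f : Module.End ℂ V => f v) (hrep a b)
  simp only [LinearMap.sub_apply, Module.End.mul_apply, LinearMap.smul_apply] at h
  have h' := sub_eq_iff_eq_add.mp h
  rw [h']; abel

lemma lemB (hrep : ∀ i j : ℤ, L i * L j - L j * L i = (j - i) • L (i + j))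
    (hfin : ∀ k : ℤ, FiniteDimensional ℂ (Module.End.eigenspace (L 0) (lam + k)))
    (C : ℤ) (hC : 1 ≤ C) (z : ℕ → V) (κ : ℕ → ℤ)
    (hz : ∀ n, z n ≠ 0)
    (hw : ∀ n, L 0 (z n) = (lam + κ n) • z n)
    (hgap : ∀ n, κ n + C ≤ κ (n + 1))
    (hkill : ∀ n, ∀ i : ℤ, C ≤ i → L i (z n) = 0)
    (hnz : ∀ n, lam + (κ n : ℂ) ≠ 0) : False := by
  classical
  set j : ℤ := κ 0 - C with hj
  have hmono : ∀ n m : ℕ, n < m → κ n + C ≤ κ m := by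
    intro n m h
    induction m with
    | zero => omega
    | succ m ih =>
      rcases Nat.lt_succ_iff_lt_or_eq.mp h with h' | h'
      · have h1 := hgap m; have h2 := ih h'; omega
      · subst h'; exact hgap n
  have hκmono : ∀ m : ℕ, κ 0 ≤ κ m := by
    intro m
    rcases Nat.eq_zero_or_pos m with rfl | h
    · exact le_rfl
    · have := hmono 0 m h; omega
  set u : ℕ → V := fun n => L (j - κ n) (z n) with hu
  have humem : ∀ n, u n ∈ Module.End.eigenspace (L 0) (lam + (j : ℂ)) := by
    intro n
    rw [Module.End.mem_eigenspace_iff]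
    have h := comm_apply hrep 0 (j - κ n) (z n)
    rw [hw n] at h
    simp only [zero_add, sub_zero] at h
    show L 0 (L (j - κ n) (z n)) = _
    rw [h, map_smul, ← Int.cast_smul_eq_zsmul ℂ, ← add_smul]
    congr 1
    push_cast
    ring
  -- action of the raising operator on u n
  have hact : ∀ m n : ℕ, n ≤ m →
      L (κ m - j) (u n) = ((j - κ n) - (κ m - j)) • L (κ m - κ n) (z n) := by
    intro m n hnm
    have h := comm_apply hrep (κ m - j) (j - κ n) (z n)
    have hkillz : L (κ m - j) (z n) = 0 := by
      apply hkill n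
      have := hκmono m; omega
    rw [hkillz, map_zero, zero_add] at h
    have hidx : (κ m - j) + (j - κ n) = κ m - κ n := by ring
    rw [hidx] at h
    exact h
  have hzero : ∀ m n : ℕ, n < m → L (κ m - j) (u n) = 0 := by
    intro m n hnm
    rw [hact m n hnm.le, hkill n _ (by have := hmono n m hnm; omega), smul_zero]
  have hdiag : ∀ m : ℕ, L (κ m - j) (u m) =
      (2 * (j - κ m)) • ((lam + (κ m : ℂ)) • z m) := by
    intro m
    rw [hact m m le_rfl]
    have h0 : κ m - κ m = (0 : ℤ) := by ring
    rw [h0, hw m]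
    congr 1
    ring
  have key : ∀ s : Finset ℕ, ∀ g : ℕ → ℂ, ∑ n ∈ s, g n • u n = 0 → ∀ n ∈ s, g n = 0 := by
    intro s
    induction s using Finset.strongInduction with
    | _ s ih =>
      intro g hsum n hn
      have hsne : s.Nonempty := ⟨n, hn⟩
      set m := s.max' hsne with hm
      have hms : m ∈ s := s.max'_mem hsne
      have h1 : ∑ p ∈ s, g p • (L (κ m - j)) (u p) = 0 := by
        have h := congrArg (L (κ m - j)) hsum
        rw [map_sum] at h
        simp only [map_smul, map_zero] at h
        exact h
      have h2 : g m • ((2 * (j - κ m) : ℤ) • ((lam + (κ m : ℂ)) • z m)) = 0 := by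
        have hs : ∑ p ∈ s, g p • (L (κ m - j)) (u p) = g m • (L (κ m - j)) (u m) :=
          Finset.sum_eq_single_of_mem m hms (fun p hp hpm => by
            rw [hzero m p (lt_of_le_of_ne (s.le_max' p hp) hpm), smul_zero])
        rw [← hdiag m, ← hs, h1]
      have hgm : g m = 0 := by
        rw [← Int.cast_smul_eq_zsmul ℂ, smul_smul, smul_smul] at h2
        have hprod := (smul_eq_zero.mp h2).resolve_right (hz m)
        have hc1 : ((2 * (j - κ m) : ℤ) : ℂ) ≠ 0 := by
          rw [Int.cast_ne_zero]
          have := hκmono m; omega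
        have hc2 := hnz m
        rcases mul_eq_zero.mp hprod with h | h
        · rcases mul_eq_zero.mp h with h' | h'
          · exact h'
          · exact absurd h' hc1
        · exact absurd h hc2
      rcases eq_or_ne n m with rfl | hne
      · exact hgm
      · have hsub : s.erase m ⊂ s := Finset.erase_ssubset hms
        have hsum' : ∑ p ∈ s.erase m, g p • u p = 0 := by
          have h : g m • u m + ∑ p ∈ s.erase m, g p • u p = ∑ p ∈ s, g p • u p :=
            Finset.add_sum_erase s (fun p => g p • u p) hms
          rw [hsum, hgm, zero_smul, zero_add] at h
          exact h
        exact ih _ hsub g hsum' n (Finset.mem_erase.mpr ⟨hne, hn⟩)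
  haveI := hfin j
  refine Module.Finite.not_linearIndependent_of_infinite (R := ℂ)
    (fun n : ℕ => (⟨u n, humem n⟩ : Module.End.eigenspace (L 0) (lam + (j : ℂ)))) ?_
  rw [linearIndependent_iff']
  intro s g hsum i hi
  refine key s g ?_ i hi
  have h := congrArg (Submodule.subtype (Module.End.eigenspace (L 0) (lam + (j : ℂ)))) hsum
  simpa using h

lemma lemB' (hrep : ∀ i j : ℤ, L i * L j - L j * L i = (j - i) • L (i + j))
    (hfin : ∀ k : ℤ, FiniteDimensional ℂ (Module.End.eigenspace (L 0) (lam + k)))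
    (C : ℤ) (hC : 1 ≤ C) (z : ℕ → V) (κ : ℕ → ℤ)
    (hz : ∀ n, z n ≠ 0)
    (hw : ∀ n, L 0 (z n) = (lam + κ n) • z n)
    (hgap : ∀ n, κ n + C ≤ κ (n + 1))
    (hkill : ∀ n, ∀ i : ℤ, C ≤ i → L i (z n) = 0) : False := by
  have hκge : ∀ n : ℕ, κ 0 + n ≤ κ n := by
    intro n
    induction n with
    | zero => simp
    | succ n ih => have := hgap n; push_cast; push_cast at ih; omega
  by_cases hex : ∃ m : ℤ, lam + m = 0
  · obtain ⟨m, hm⟩ := hex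
    set n₀ : ℕ := (m - κ 0).toNat + 1 with hn₀
    refine lemB hrep hfin C hC (fun n => z (n + n₀)) (fun n => κ (n + n₀))
      (fun n => hz _) (fun n => hw _) ?_ (fun n i hi => hkill _ i hi) ?_
    · intro n
      have := hgap (n + n₀)
      have he : n + n₀ + 1 = n + 1 + n₀ := by omega
      rw [he] at this
      exact this
    · intro n hcon
      have hce : ((κ (n + n₀) : ℂ)) = (m : ℂ) := by linear_combination hcon - hm
      have hint : κ (n + n₀) = m := by exact_mod_cast hce
      have h1 := hκge (n + n₀)
      have h2 : (n₀ : ℤ) ≤ ((n + n₀ : ℕ) : ℤ) := by push_cast; omega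
      omega
  · exact lemB hrep hfin C hC z κ hz hw hgap hkill (fun n h => hex ⟨κ n, h⟩)

lemma caseHW (hrep : ∀ i j : ℤ, L i * L j - L j * L i = (j - i) • L (i + j))
    (hfin : ∀ k : ℤ, FiniteDimensional ℂ (Module.End.eigenspace (L 0) (lam + k)))
    (hQ : ∀ T : ℤ, ∃ (k : ℤ) (w : V), T < k ∧ w ≠ 0 ∧ L 0 w = (lam + k) • w ∧
      ∀ i : ℤ, 1 ≤ i → L i w = 0) : False := by
  have step : ∀ T : ℤ, ∃ p : V × ℤ, T < p.2 ∧ p.1 ≠ 0 ∧ L 0 p.1 = (lam + p.2) • p.1 ∧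
      ∀ i : ℤ, 1 ≤ i → L i p.1 = 0 := by
    intro T
    obtain ⟨k, w, h1, h2, h3, h4⟩ := hQ T
    exact ⟨(w, k), h1, h2, h3, h4⟩
  choose f hf1 hf2 hf3 hf4 using step
  let seq : ℕ → V × ℤ := fun n => Nat.rec (f 0) (fun _ p => f p.2) n
  have hseq : ∀ n, seq (n + 1) = f (seq n).2 := fun n => rfl
  have hall : ∀ n, (seq n).1 ≠ 0 ∧ L 0 (seq n).1 = (lam + (seq n).2) • (seq n).1 ∧
      ∀ i : ℤ, 1 ≤ i → L i (seq n).1 = 0 := by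
    intro n
    cases n with
    | zero => exact ⟨hf2 0, hf3 0, hf4 0⟩
    | succ m => exact ⟨hf2 _, hf3 _, hf4 _⟩
  refine lemB' hrep hfin 1 le_rfl (fun n => (seq n).1) (fun n => (seq n).2)
    (fun n => (hall n).1) (fun n => (hall n).2.1) ?_ (fun n => (hall n).2.2)
  intro n
  have h := hf1 (seq n).2
  show (seq n).2 + 1 ≤ (seq (n+1)).2
  rw [hseq n]
  omega

lemma stepNoHW (hrep : ∀ i j : ℤ, L i * L j - L j * L i = (j - i) • L (i + j))
    (T : ℤ)
    (hT : ∀ k : ℤ, T < k → ∀ w : V, w ≠ 0 → L 0 w = (lam + k) • w →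
      ∃ i : ℤ, 1 ≤ i ∧ L i w ≠ 0) :
    ∀ (v : V) (k B : ℤ), v ≠ 0 → L 0 v = (lam + k) • v → T < k → 1 ≤ B →
      (∀ i : ℤ, B < i → L i v = 0) →
      ∃ (v' : V) (B' : ℤ), v' ≠ 0 ∧ L 0 v' = (lam + (k + B' : ℤ)) • v' ∧ T < k + B' ∧
        1 ≤ B' ∧ (∀ i : ℤ, B' < i → L i v' = 0) ∧ B' ≤ B := by
  classical
  intro v k B hv hwv hk hB hkl
  obtain ⟨i0, hi01, hi0ne⟩ := hT k hk v hv hwv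
  set F : Finset ℤ := (Finset.Icc 1 B).filter (fun i => L i v ≠ 0) with hF
  have hi0F : i0 ∈ F := by
    rw [hF, Finset.mem_filter, Finset.mem_Icc]
    refine ⟨⟨hi01, ?_⟩, hi0ne⟩
    by_contra hgt
    push_neg at hgt
    exact hi0ne (hkl i0 hgt)
  have hFne : F.Nonempty := ⟨i0, hi0F⟩
  set i := F.max' hFne with hi
  have hiF : i ∈ F := F.max'_mem hFne
  rw [hF, Finset.mem_filter, Finset.mem_Icc] at hiF
  obtain ⟨⟨hi1, hiB⟩, hine⟩ := hiF
  have hmax : ∀ i' : ℤ, i < i' → L i' v = 0 := by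
    intro i' hii'
    by_cases hle : i' ≤ B
    · by_contra hne'
      have hmem : i' ∈ F := by
        rw [hF, Finset.mem_filter, Finset.mem_Icc]
        exact ⟨⟨by omega, hle⟩, hne'⟩
      have := F.le_max' i' hmem
      omega
    · exact hkl i' (by omega)
  refine ⟨L i v, i, hine, ?_, by omega, hi1, ?_, hiB⟩
  · have h := comm_apply hrep 0 i v
    rw [hwv] at h
    simp only [zero_add, sub_zero] at h
    rw [h, map_smul, ← Int.cast_smul_eq_zsmul ℂ, ← add_smul]
    congr 1
    push_cast
    ring
  · intro i' hii'
    have h := comm_apply hrep i' i v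
    rw [hmax i' hii', map_zero, hmax (i' + i) (by omega), smul_zero, zero_add] at h
    exact h

lemma caseNoHW (hrep : ∀ i j : ℤ, L i * L j - L j * L i = (j - i) • L (i + j))
    (hfin : ∀ k : ℤ, FiniteDimensional ℂ (Module.End.eigenspace (L 0) (lam + k)))
    (T : ℤ)
    (hT : ∀ k : ℤ, T < k → ∀ w : V, w ≠ 0 → L 0 w = (lam + k) • w →
      ∃ i : ℤ, 1 ≤ i ∧ L i w ≠ 0)
    (v0 : V) (k0 B0 : ℤ) (hv0 : v0 ≠ 0) (hw0 : L 0 v0 = (lam + k0) • v0)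
    (hk0 : T < k0) (hB0 : 1 ≤ B0) (hkl0 : ∀ i : ℤ, B0 < i → L i v0 = 0) : False := by
  classical
  have hnext : ∀ s : {q : V × ℤ × ℤ // q.1 ≠ 0 ∧ L 0 q.1 = (lam + q.2.1) • q.1 ∧
      T < q.2.1 ∧ 1 ≤ q.2.2 ∧ ∀ i : ℤ, q.2.2 < i → L i q.1 = 0},
      ∃ s' : {q : V × ℤ × ℤ // q.1 ≠ 0 ∧ L 0 q.1 = (lam + q.2.1) • q.1 ∧
        T < q.2.1 ∧ 1 ≤ q.2.2 ∧ ∀ i : ℤ, q.2.2 < i → L i q.1 = 0},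
      s'.1.2.1 = s.1.2.1 + s'.1.2.2 ∧ s'.1.2.2 ≤ s.1.2.2 := by
    rintro ⟨⟨v, k, B⟩, hv, hwv, hk, hB, hkl⟩
    obtain ⟨v', B', h1, h2, h3, h4, h5, h6⟩ := stepNoHW hrep T hT v k B hv hwv hk hB hkl
    exact ⟨⟨(v', k + B', B'), h1, h2, h3, h4, h5⟩, rfl, h6⟩
  choose nxt hnxt1 hnxt2 using hnext
  let s0 : {q : V × ℤ × ℤ // q.1 ≠ 0 ∧ L 0 q.1 = (lam + q.2.1) • q.1 ∧
      T < q.2.1 ∧ 1 ≤ q.2.2 ∧ ∀ i : ℤ, q.2.2 < i → L i q.1 = 0} :=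
    ⟨(v0, k0, B0), hv0, hw0, hk0, hB0, hkl0⟩
  let ch : ℕ → {q : V × ℤ × ℤ // q.1 ≠ 0 ∧ L 0 q.1 = (lam + q.2.1) • q.1 ∧
      T < q.2.1 ∧ 1 ≤ q.2.2 ∧ ∀ i : ℤ, q.2.2 < i → L i q.1 = 0} :=
    fun n => Nat.rec s0 (fun _ s => nxt s) n
  have hch0 : ch 0 = s0 := rfl
  have hch : ∀ n, ch (n + 1) = nxt (ch n) := fun n => rfl
  have hBle : ∀ n, (ch n).1.2.2 ≤ B0 := by
    intro n
    induction n with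
    | zero => exact le_rfl
    | succ n ih =>
      have h := hnxt2 (ch n)
      rw [← hch n] at h
      omega
  have hstep1 : ∀ n, (ch n).1.2.1 + 1 ≤ (ch (n + 1)).1.2.1 := by
    intro n
    have h1 := hnxt1 (ch n)
    have h2 := (nxt (ch n)).2.2.2.2.1
    rw [← hch n] at h1 h2
    omega
  have hadd : ∀ n t : ℕ, (ch n).1.2.1 + t ≤ (ch (n + t)).1.2.1 := by
    intro n t
    induction t with
    | zero => simp
    | succ t ih =>
      have h := hstep1 (n + t)
      have he : n + (t + 1) = (n + t) + 1 := by omega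
      rw [he]
      push_cast
      push_cast at ih
      omega
  set sN : ℕ := (B0 + 1).toNat with hsN
  have hsNc : (sN : ℤ) = B0 + 1 := by omega
  refine lemB' hrep hfin (B0 + 1) (by omega) (fun n => (ch (n * sN)).1.1)
    (fun n => (ch (n * sN)).1.2.1) (fun n => (ch (n * sN)).2.1)
    (fun n => (ch (n * sN)).2.2.1) ?_ ?_
  · intro n
    have h := hadd (n * sN) sN
    have he : n * sN + sN = (n + 1) * sN := by ring
    rw [he] at h
    show (ch (n * sN)).1.2.1 + (B0 + 1) ≤ (ch ((n + 1) * sN)).1.2.1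
    omega
  · intro n i hi
    refine (ch (n * sN)).2.2.2.2.2 i ?_
    have := hBle (n * sN)
    omega

end Stmt14Aux


/-- Let `M` be a weight module over the Witt algebra `W_{1,0} = Der ℂ[t, t⁻¹]`
(with basis `L i = t^{i+1} d/dt`, brackets `[L i, L j] = (j - i) L (i+j)`) with
finite-dimensional weight spaces and support contained in `λ + ℤ`.  If for every
`v ∈ M` there is `N(v)` with `L i · v = 0` for all `i ≥ N(v)`, then the support of
`M` is upper bounded: there is `k₀` such that the weight space of `λ + k` vanishes
for all `k > k₀`. -/
theorem stmt14 (V : Type*) [AddCommGroup V] [Module ℂ V]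
    (L : ℤ → Module.End ℂ V)
    (hrep : ∀ i j : ℤ, L i * L j - L j * L i = (j - i) • L (i + j))
    (lam : ℂ)
    (hwt : (⨆ k : ℤ, Module.End.eigenspace (L 0) (lam + k)) = ⊤)
    (hfin : ∀ k : ℤ, FiniteDimensional ℂ (Module.End.eigenspace (L 0) (lam + k)))
    (hup : ∀ v : V, ∃ N : ℕ, ∀ i : ℤ, (N : ℤ) ≤ i → L i v = 0) :
    ∃ k₀ : ℤ, ∀ k : ℤ, k₀ < k → Module.End.eigenspace (L 0) (lam + k) = ⊥ := by
  by_contra hcon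
  push_neg at hcon
  by_cases hQ : ∀ T : ℤ, ∃ (k : ℤ) (w : V), T < k ∧ w ≠ 0 ∧ L 0 w = (lam + k) • w ∧
      ∀ i : ℤ, 1 ≤ i → L i w = 0
  · exact Stmt14Aux.caseHW hrep hfin hQ
  · push_neg at hQ
    obtain ⟨T, hT⟩ := hQ
    obtain ⟨k0, hk0, hne⟩ := hcon T
    obtain ⟨v0, hv0mem, hv0⟩ := (Submodule.ne_bot_iff _).mp hne
    obtain ⟨N, hN⟩ := hup v0
    refine Stmt14Aux.caseNoHW hrep hfin T (fun k hk w => hT k w hk) v0 k0 (max (N : ℤ) 1)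
      hv0 (Module.End.mem_eigenspace_iff.mp hv0mem) hk0 (le_max_right _ _) ?_
    intro i hi
    exact hN i (by omega)
end
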